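/- Let G be a connected simple graph on V, s ∈ V a designated source, and D ⊆ V. Suppose there exist nonnegative reals y_{ij}, y_{ji} for each edge {i,j} ∈ E(G) satisfying: (flow conservation) for every i ≠ s, the net inflow Σ_{j ∈ N_i} (y_{ji} − y_{ij}) equals 1; and (capacity) y_{ij} + y_{ji} = 0 whenever i ∉ D and j ∉ D. Then the spanning subgraph (V, I_D(E)) with edges of G incident to D is connected, i.e., D is a relaxed connected dominating set of G. -/

import Mathlib

open SimpleGraph

variable {V : Type*}

/-- Spanning subgraph of `G` whose edges are the edges of `G` with at least one
endpoint in `D` (edge set `I_D(E)`). -/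
def incSub (G : SimpleGraph V) (D : Set V) : SimpleGraph V where
  Adj u v := G.Adj u v ∧ (u ∈ D ∨ v ∈ D)
  symm := ⟨fun u v h => ⟨h.1.symm, h.2.symm⟩⟩
  loopless := ⟨fun v h => G.loopless.1 v h.1⟩

/-- `D` is a dominating set of `G`. -/
def Dominating (G : SimpleGraph V) (D : Set V) : Prop :=
  ∀ v : V, v ∈ D ∨ ∃ u ∈ D, G.Adj v u

/-- Any two members of `D` are joined by a walk in `G` such that whenever
`i_s, i_t ∈ D`, `s < t`, and no vertex strictly between them lies in `D`,
it holds that `t = s + 2`. -/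
def RelaxedConnEq (G : SimpleGraph V) (D : Set V) : Prop :=
  ∀ i ∈ D, ∀ j ∈ D, ∃ (p : ℕ) (f : ℕ → V), f 0 = i ∧ f p = j ∧
    (∀ k, k < p → G.Adj (f k) (f (k + 1))) ∧
    (∀ s t, s < t → t ≤ p → f s ∈ D → f t ∈ D →
      (∀ k, s < k → k < t → f k ∉ D) → t = s + 2)

/-- Any two members of `D` are joined by a walk in `G` on which between any two
consecutive members of `D` there is at most one vertex not in `D`. -/
def RelaxedConnLe (G : SimpleGraph V) (D : Set V) : Prop :=
  ∀ i ∈ D, ∀ j ∈ D, ∃ (p : ℕ) (f : ℕ → V), f 0 = i ∧ f p = j ∧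
    (∀ k, k < p → G.Adj (f k) (f (k + 1))) ∧
    (∀ s t, s < t → t ≤ p → f s ∈ D → f t ∈ D →
      (∀ k, s < k → k < t → f k ∉ D) → t ≤ s + 2)

/-!
Let `S` be the set of vertices not reachable from `s` in `(V, I_D(E))`, and suppose it is
nonempty. Since `s ∉ S`, every vertex of `S` has net inflow `1`, so the net inflow into `S` is
`|S| > 0`. Flow along edges inside `S` cancels, so some edge `{j, i}` with `j ∉ S`, `i ∈ S`
carries positive flow from `j` to `i`. By the capacity constraint this edge meets `D`, hence lies
in `I_D(E)`, and `i` is reachable from `s` after all.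
-/

open Finset

section Antisymm

variable {α M : Type*} [AddCommGroup M] [LinearOrder M] [IsOrderedAddMonoid M]
  {f : α → α → M}

theorem Finset.sum_sum_eq_zero_of_antisymm (hf : ∀ i j, f i j = -f j i) (S : Finset α) :
    ∑ i ∈ S, ∑ j ∈ S, f i j = 0 := by
  have h : ∑ i ∈ S, ∑ j ∈ S, f i j = -∑ i ∈ S, ∑ j ∈ S, f i j :=
    calc ∑ i ∈ S, ∑ j ∈ S, f i j = ∑ i ∈ S, ∑ j ∈ S, -f j i :=
          sum_congr rfl fun i _ => sum_congr rfl fun j _ => hf i j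
      _ = -∑ j ∈ S, ∑ i ∈ S, f j i := by rw [sum_comm]; simp only [sum_neg_distrib]
  exact self_eq_neg.1 h

theorem Finset.exists_mem_notMem_pos_of_antisymm [Fintype α] [DecidableEq α]
    (hf : ∀ i j, f i j = -f j i) (S : Finset α) (h : 0 < ∑ i ∈ S, ∑ j, f i j) :
    ∃ i ∈ S, ∃ j ∉ S, 0 < f i j := by
  have hout : ∑ i ∈ S, ∑ j, f i j = ∑ i ∈ S, ∑ j ∈ Sᶜ, f i j := by
    simp only [← sum_add_sum_compl S, sum_add_distrib, sum_sum_eq_zero_of_antisymm hf, zero_add]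
  by_contra! hle
  exact (sum_nonpos fun i hi => sum_nonpos fun j hj => hle i hi j (mem_compl.1 hj)).not_gt
    (hout ▸ h)

end Antisymm

namespace SimpleGraph

variable (G : SimpleGraph V) [DecidableRel G.Adj]

def netInflow (y : V → V → ℝ) (i j : V) : ℝ :=
  if G.Adj i j then y j i - y i j else 0

theorem netInflow_antisymm (y : V → V → ℝ) (i j : V) :
    G.netInflow y i j = -G.netInflow y j i := by
  by_cases h : G.Adj i j
  · simp only [netInflow, h, h.symm, if_true, neg_sub]
  · simp only [netInflow, h, if_neg (mt G.adj_symm h), if_false, neg_zero]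

theorem sum_netInflow [Fintype V] (y : V → V → ℝ) (i : V) :
    ∑ j, G.netInflow y i j = ∑ j ∈ G.neighborFinset i, (y j i - y i j) := by
  rw [neighborFinset_eq_filter, sum_filter]
  rfl

theorem incSub_adj_of_netInflow_pos {D : Set V} {y : V → V → ℝ} (hnonneg : ∀ i j, 0 ≤ y i j)
    (hcap : ∀ i j, G.Adj i j → i ∉ D → j ∉ D → y i j + y j i = 0) {i j : V}
    (h : 0 < G.netInflow y i j) : (incSub G D).Adj i j := by
  have hadj : G.Adj i j := by
    by_contra hn
    simp [netInflow, hn] at h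
  refine ⟨hadj, ?_⟩
  by_contra! hD
  have hpos : 0 < y j i - y i j := by simpa [netInflow, hadj] using h
  linarith [hcap i j hadj hD.1 hD.2, hnonneg i j]

end SimpleGraph

theorem stmt_19_general [Fintype V] (G : SimpleGraph V)
    [DecidableRel G.Adj] (s : V) (D : Set V) (y : V → V → ℝ)
    (hnonneg : ∀ i j : V, 0 ≤ y i j)
    (hflow : ∀ i : V, i ≠ s →
      ∑ j ∈ G.neighborFinset i, (y j i - y i j) = 1)
    (hcap : ∀ i j : V, G.Adj i j → i ∉ D → j ∉ D → y i j + y j i = 0) :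
    (incSub G D).Connected := by
  classical
  refine (connected_iff_exists_forall_reachable _).2 ⟨s, fun v => ?_⟩
  by_contra hv
  set S := univ.filter fun u => ¬(incSub G D).Reachable s u
  have hsS : s ∉ S := by simp [S]
  have hinflow : 0 < ∑ i ∈ S, ∑ j, G.netInflow y i j := by
    refine sum_pos (fun i hi => ?_) ⟨v, by simp [S, hv]⟩
    rw [G.sum_netInflow, hflow i (ne_of_mem_of_not_mem hi hsS)]
    exact one_pos
  obtain ⟨i, hi, j, hj, hpos⟩ :=
    exists_mem_notMem_pos_of_antisymm (G.netInflow_antisymm y) S hinflow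
  have hreach : (incSub G D).Reachable s j := by simpa [S] using hj
  have hadj := G.incSub_adj_of_netInflow_pos hnonneg hcap hpos
  exact (mem_filter.1 hi).2 (hreach.trans hadj.symm.reachable)

theorem stmt_19 [Fintype V] [Nonempty V] [DecidableEq V] (G : SimpleGraph V)
    [DecidableRel G.Adj] (hG : G.Connected) (s : V) (D : Set V) (y : V → V → ℝ)
    (hnonneg : ∀ i j : V, 0 ≤ y i j)
    (hflow : ∀ i : V, i ≠ s →
      ∑ j ∈ G.neighborFinset i, (y j i - y i j) = 1)
    (hcap : ∀ i j : V, G.Adj i j → i ∉ D → j ∉ D → y i j + y j i = 0) :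
    (incSub G D).Connected :=
  stmt_19_general G s D y hnonneg hflow hcap
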